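/- Let n ≥ 2 and let d : {1,…,n} → ℝ satisfy d(1) = 1 and 0 ≤ d(i) < 1 for every i ≠ 1. Let Ω := {z ∈ ℂⁿ | Im(z_n) > 0}, let F : Ω → ℂ be holomorphic, and write E := Σ_{α=1}^n d(α)·z_α·∂_α for the weighted Euler operator. Suppose E F = 2F on Ω and E(∂_ε∂_μ F) = 0 on Ω for all pairs of indices ε, μ. Then there exists a constant c ∈ ℂ such that F(z) = c·z₁² for all z ∈ Ω. -/

import Mathlib

/-!
Differentiating `E F = 2 F` shows that `∂_μ F` and `∂_ε ∂_μ F` are eigenfunctions of the Euler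
operator, `E (∂_ε ∂_μ F) = (2 - d_ε - d_μ) ∂_ε ∂_μ F`. Since `d_ε + d_μ < 2` unless `ε = μ = 1`,
the hypothesis `E (∂_ε ∂_μ F) = 0` kills every second derivative but `H = ∂_1 ∂_1 F`. Then
`0 = E H = z_1 ∂_1 H` forces `∂_1 H = 0`, so `H` is a constant `c` on the connected set `Ω`, and
reading the Euler identities back gives `∂_μ F = 0` for `μ ≠ 1`, `∂_1 F = c z_1` and
`2 F = E F = c z_1²`.

Commuting the partial derivatives uses that holomorphic functions of several variables are `C²`.
-/

/-- The partial derivative `∂_α f` of a function `f : ℂⁿ → ℂ` in the direction of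
the `α`-th coordinate. -/
noncomputable def pd {n : ℕ} (α : Fin n) (f : (Fin n → ℂ) → ℂ) :
    (Fin n → ℂ) → ℂ :=
  fun z => fderiv ℂ f z (Pi.single α 1)

/-- The weighted Euler operator `E f = Σ_α d(α)·z_α·∂_α f`. -/
noncomputable def eulerOp {n : ℕ} (d : Fin n → ℝ) (f : (Fin n → ℂ) → ℂ) :
    (Fin n → ℂ) → ℂ :=
  fun z => ∑ α : Fin n, (d α : ℂ) * z α * pd α f z

open Set Metric Complex Filter Topology MeasureTheory Real

section Holomorphic

variable {E F : Type*} [NormedAddCommGroup E] [NormedSpace ℂ E]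
  [NormedAddCommGroup F] [NormedSpace ℂ F] {f : E → F} {U : Set E}

theorem norm_fderiv_le_of_forall_mem_ball_norm_le {x : E} {R M : ℝ}
    (hf : DifferentiableOn ℂ f (ball x R)) (hR : 0 < R) (hM : ∀ y ∈ ball x R, ‖f y‖ ≤ M) :
    ‖fderiv ℂ f x‖ ≤ 2 * M / R := by
  refine Complex.norm_fderiv_le_div_of_mapsTo_ball hf (fun y hy => ?_) hR
  rw [mem_closedBall, dist_eq_norm]
  linarith [norm_sub_le (f y) (f x), hM y hy, hM x (mem_ball_self hR)]

theorem exists_forall_mem_ball_norm_fderiv_le (hU : IsOpen U) (hf : DifferentiableOn ℂ f U)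
    {x₀ : E} (hx₀ : x₀ ∈ U) :
    ∃ ρ > 0, ∃ C, ball x₀ ρ ⊆ U ∧ ∀ y ∈ ball x₀ ρ, ‖fderiv ℂ f y‖ ≤ C := by
  obtain ⟨ε, hε, hεU⟩ : ∃ ε > 0, ∀ y ∈ ball x₀ ε, y ∈ U ∧ ‖f y‖ ≤ ‖f x₀‖ + 1 := by
    refine Metric.eventually_nhds_iff_ball.1 ((hU.eventually_mem hx₀).and ?_)
    exact ((hf.continuousOn.continuousAt (hU.mem_nhds hx₀)).norm.eventually
      (Iio_mem_nhds (lt_add_one _))).mono fun y hy => hy.le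
  refine ⟨ε / 2, by positivity, 2 * (‖f x₀‖ + 1) / (ε / 2),
    fun y hy => (hεU y (ball_subset_ball (by linarith) hy)).1, fun y hy => ?_⟩
  have hsub : ball y (ε / 2) ⊆ ball x₀ ε := ball_subset_ball' (by rw [mem_ball] at hy; linarith)
  exact norm_fderiv_le_of_forall_mem_ball_norm_le
    (hf.mono fun z hz => (hεU z (hsub hz)).1) (by positivity) fun z hz => (hεU z (hsub hz)).2

variable [CompleteSpace F]

theorem fderiv_apply_eq_intervalIntegral (hU : IsOpen U) (hf : DifferentiableOn ℂ f U)
    {x v : E} {r : ℝ} (hr : 0 < r) (hxr : ∀ t ∈ closedBall (0 : ℂ) r, x + t • v ∈ U) :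
    fderiv ℂ f x v = (2 * π * I)⁻¹ • ∫ θ in 0..2 * π,
      (circleMap 0 r θ * I * (circleMap 0 r θ ^ 2)⁻¹) • f (x + circleMap 0 r θ • v) := by
  have hline : ∀ s : ℂ, HasDerivAt (fun t : ℂ => x + t • v) v s := fun s => by
    simpa using ((hasDerivAt_id s).smul_const v).const_add x
  have hV : IsOpen ((fun t : ℂ => x + t • v) ⁻¹' U) :=
    hU.preimage (continuous_const.add (continuous_id.smul continuous_const))
  have hg : DifferentiableOn ℂ (fun t : ℂ => f (x + t • v)) ((fun t : ℂ => x + t • v) ⁻¹' U) :=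
    hf.comp (fun s _ => (hline s).differentiableAt.differentiableWithinAt) (mapsTo_preimage _ _)
  have hx : x ∈ U := by simpa using hxr 0 (mem_closedBall_self hr.le)
  have hfx : HasFDerivAt f (fderiv ℂ f x) (x + (0 : ℂ) • v) := by
    simpa using (hf.differentiableAt (hU.mem_nhds hx)).hasFDerivAt
  have hderiv : deriv (fun t : ℂ => f (x + t • v)) 0 = fderiv ℂ f x v :=
    (hfx.comp_hasDerivAt 0 (hline 0)).deriv
  rw [← hderiv, ← cderiv_eq_deriv hV hg hr hxr]
  simp [cderiv, circleIntegral, deriv_circleMap, smul_smul]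

theorem hasFDerivAt_intervalIntegral_smul_comp_add [FiniteDimensional ℂ E]
    [SecondCountableTopology F] (hU : IsOpen U) (hf : DifferentiableOn ℂ f U) {k : ℝ → ℂ}
    {γ : ℝ → E} (hk : Continuous k) (hγ : Continuous γ) {x₀ : E} {ρ C a b : ℝ} (hρ : 0 < ρ)
    (hmem : ∀ x ∈ ball x₀ ρ, ∀ θ, x + γ θ ∈ U)
    (hC : ∀ x ∈ ball x₀ ρ, ∀ θ, ‖k θ • fderiv ℂ f (x + γ θ)‖ ≤ C) :
    HasFDerivAt (fun x => ∫ θ in a..b, k θ • f (x + γ θ))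
      (∫ θ in a..b, k θ • fderiv ℂ f (x₀ + γ θ)) x₀ := by
  have hcont : ∀ x ∈ ball x₀ ρ, Continuous fun θ => k θ • f (x + γ θ) := fun x hx =>
    hk.smul (hf.continuousOn.comp_continuous (by fun_prop) (hmem x hx))
  borelize E
  refine intervalIntegral.hasFDerivAt_integral_of_dominated_of_fderiv_le (bound := fun _ => C)
    (ball_mem_nhds x₀ hρ) ?_ ((hcont x₀ (mem_ball_self hρ)).intervalIntegrable _ _) ?_
    (ae_of_all _ fun θ _ x hx => hC x hx θ) intervalIntegrable_const
    (ae_of_all _ fun θ _ x hx => ?_)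
  · filter_upwards [ball_mem_nhds x₀ hρ] with x hx using (hcont x hx).aestronglyMeasurable
  · exact (hk.stronglyMeasurable.smul ((measurable_fderiv ℂ f).comp
      (by fun_prop : Continuous fun θ => x₀ + γ θ).measurable).stronglyMeasurable
      ).aestronglyMeasurable
  · have hfx := (hf.differentiableAt (hU.mem_nhds (hmem x hx θ))).hasFDerivAt
    exact (hfx.comp x ((hasFDerivAt_id x).add_const (γ θ))).fun_const_smul (k θ)

/-- Cauchy's formula on the discs `t ↦ x + t • v` writes `fderiv ℂ f x v` as an integral of
translates of `f`, which can be differentiated in `x` under the integral sign. -/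
theorem DifferentiableOn.fderiv_apply [FiniteDimensional ℂ E] [SecondCountableTopology F]
    (hU : IsOpen U) (hf : DifferentiableOn ℂ f U) (v : E) :
    DifferentiableOn ℂ (fun x => fderiv ℂ f x v) U := by
  intro x₀ hx₀
  obtain ⟨ρ, hρ, C, hρU, hC⟩ := exists_forall_mem_ball_norm_fderiv_le hU hf hx₀
  set r := ρ / 2 / (‖v‖ + 1) with hr_def
  have hr : 0 < r := by positivity
  have hshift : ∀ x ∈ ball x₀ (ρ / 2), ∀ t ∈ closedBall (0 : ℂ) r, x + t • v ∈ ball x₀ ρ := by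
    intro x hx t ht
    rw [mem_closedBall, dist_zero_right] at ht
    have htv : ‖t • v‖ ≤ ρ / 2 := by
      rw [norm_smul]
      calc ‖t‖ * ‖v‖ ≤ r * (‖v‖ + 1) := by gcongr; linarith
        _ = ρ / 2 := by rw [hr_def]; field_simp
    rw [mem_ball] at hx ⊢
    linarith [dist_triangle (x + t • v) x x₀, dist_self_add_left (t • v) x]
  set c : ℝ → ℂ := circleMap 0 r
  have hc : ∀ θ, c θ ∈ closedBall (0 : ℂ) r := fun θ => by
    simp [c, norm_circleMap_zero, abs_of_pos hr]
  set k : ℝ → ℂ := fun θ => c θ * I * (c θ ^ 2)⁻¹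
  have hk : Continuous k := by
    have hc_cont := continuous_circleMap 0 r
    exact (hc_cont.mul continuous_const).mul
      ((hc_cont.pow 2).inv₀ fun θ => pow_ne_zero 2 (circleMap_ne_center hr.ne'))
  have hk_norm : ∀ θ, ‖k θ‖ = r⁻¹ := fun θ => by
    simp only [k, c, Complex.norm_mul, norm_circleMap_zero, abs_of_pos hr, norm_I, mul_one,
      norm_inv, norm_pow]
    field_simp
  have hint := hasFDerivAt_intervalIntegral_smul_comp_add (a := 0) (b := 2 * π) hU hf hk
    (by fun_prop : Continuous fun θ => c θ • v) (by positivity : 0 < ρ / 2)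
    (fun x hx θ => hρU (hshift x hx _ (hc θ))) fun x hx θ => by
      rw [norm_smul, hk_norm]
      exact mul_le_mul_of_nonneg_left (hC _ (hshift x hx _ (hc θ))) (by positivity)
  refine ((hint.differentiableAt.const_smul (2 * π * I)⁻¹).congr_of_eventuallyEq ?_)
    |>.differentiableWithinAt
  exact eventually_of_mem (ball_mem_nhds x₀ (by positivity)) fun x hx =>
    fderiv_apply_eq_intervalIntegral hU hf hr fun t ht => hρU (hshift x hx t ht)

theorem DifferentiableOn.contDiffOn_of_finiteDimensional [FiniteDimensional ℂ E]
    [SecondCountableTopology F] (hU : IsOpen U) (hf : DifferentiableOn ℂ f U) (n : ℕ) :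
    ContDiffOn ℂ n f U := by
  induction n generalizing f with
  | zero => exact contDiffOn_zero.2 hf.continuousOn
  | succ n ih =>
    exact_mod_cast contDiffOn_succ_of_fderiv_apply (n := n) hf (by simp) fun v =>
      (ih (hf.fderiv_apply hU v)).congr fun x hx => by rw [fderivWithin_of_isOpen hU hx]

end Holomorphic

section PartialDerivatives

variable {n : ℕ} {U : Set (Fin n → ℂ)} {f g : (Fin n → ℂ) → ℂ} {z : Fin n → ℂ}

theorem DifferentiableOn.pd (hU : IsOpen U) (hf : DifferentiableOn ℂ f U) (α : Fin n) :
    DifferentiableOn ℂ (pd α f) U :=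
  hf.fderiv_apply hU _

theorem Set.EqOn.pd_eq (h : EqOn f g U) (hU : IsOpen U) (hz : z ∈ U) (α : Fin n) :
    pd α f z = pd α g z := by
  rw [pd, pd, (h.eventuallyEq_of_mem (hU.mem_nhds hz)).fderiv_eq]

theorem pd_const_mul (hf : DifferentiableAt ℂ f z) (b : ℂ) (α : Fin n) :
    pd α (fun w => b * f w) z = b * pd α f z := by
  simp [pd, fderiv_const_mul hf]

theorem fderiv_apply_eq_sum_pd (v : Fin n → ℂ) : fderiv ℂ f z v = ∑ α, v α * pd α f z := by
  conv_lhs => rw [← Finset.univ_sum_single v]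
  simp only [pd, map_sum]
  refine Finset.sum_congr rfl fun α _ => ?_
  rw [← smul_eq_mul, ← map_smul, ← Pi.single_smul', smul_eq_mul, mul_one]

theorem pd_pd_comm (hU : IsOpen U) (hf : DifferentiableOn ℂ f U) (hz : z ∈ U) (ε μ : Fin n) :
    pd ε (pd μ f) z = pd μ (pd ε f) z := by
  have hf2 : ContDiffAt ℂ 2 f z :=
    (hf.contDiffOn_of_finiteDimensional hU 2).contDiffAt (hU.mem_nhds hz)
  have hdf : DifferentiableAt ℂ (fderiv ℂ f) z :=
    (hf2.fderiv_right (m := 1) le_rfl).differentiableAt one_ne_zero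
  have hsnd : ∀ a b : Fin n,
      pd a (pd b f) z = fderiv ℂ (fderiv ℂ f) z (Pi.single a 1) (Pi.single b 1) := fun a b => by
    change fderiv ℂ (fun w => fderiv ℂ f w (Pi.single b 1)) z (Pi.single a 1) = _
    simp [fderiv_clm_apply hdf (differentiableAt_const _)]
  rw [hsnd, hsnd, hf2.isSymmSndFDerivAt (by simp)]

theorem pd_eulerOp (hU : IsOpen U) (hf : DifferentiableOn ℂ f U) (d : Fin n → ℝ) (hz : z ∈ U)
    (ε : Fin n) : pd ε (eulerOp d f) z = d ε * pd ε f z + eulerOp d (pd ε f) z := by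
  have hE : HasFDerivAt (eulerOp d f) (∑ α, (((d α : ℂ) * z α) • fderiv ℂ (pd α f) z
      + pd α f z • (d α : ℂ) • ContinuousLinearMap.proj α)) z :=
    HasFDerivAt.fun_sum fun α _ => ((ContinuousLinearMap.proj α).hasFDerivAt.const_mul _).mul
      ((hf.pd hU α).differentiableAt (hU.mem_nhds hz)).hasFDerivAt
  have hcomm : ∀ α, fderiv ℂ (pd α f) z (Pi.single ε 1) = pd α (pd ε f) z :=
    fun α => pd_pd_comm hU hf hz ε α
  rw [pd, hE.fderiv]
  simp only [sum_apply, add_apply, smul_apply, ContinuousLinearMap.proj_apply, smul_eq_mul,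
    hcomm, Finset.sum_add_distrib]
  rw [add_comm]
  congr 1
  simp [Pi.single_apply, mul_comm]

theorem pd_eq_zero_of_eqOn_zero (h : EqOn f 0 U) (hU : IsOpen U) (hz : z ∈ U) (α : Fin n) :
    pd α f z = 0 := by
  rw [h.pd_eq hU hz]
  simp [pd]

theorem exists_eq_const_of_pd_eq_zero (hU : IsOpen U) (hU' : IsPreconnected U)
    (hf : DifferentiableOn ℂ f U) (h : ∀ α, ∀ z ∈ U, pd α f z = 0) : ∃ c, ∀ z ∈ U, f z = c :=
  hU.exists_is_const_of_fderiv_eq_zero hU' hf fun z hz => by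
    ext v
    simp [fderiv_apply_eq_sum_pd, h _ z hz]

theorem eqOn_zero_of_coord_mul_eq_zero (hU : IsOpen U) (hg : ContinuousOn g U) (i : Fin n)
    (h : ∀ z ∈ U, z i * g z = 0) : EqOn g 0 U := by
  have hD : Dense {z : Fin n → ℂ | z i ≠ 0} :=
    (dense_compl_singleton (0 : ℂ)).preimage (isOpenMap_eval i)
  refine EqOn.of_subset_closure (s := U ∩ {z | z i ≠ 0}) (fun z hz => ?_) hg continuousOn_const
    inter_subset_left (hD.open_subset_closure_inter hU)
  exact (mul_eq_zero.1 (h z hz.1)).resolve_left hz.2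

theorem eulerOp_eq_of_pd_eq_zero {i : Fin n} (h : ∀ α ≠ i, pd α f z = 0) (d : Fin n → ℝ) :
    eulerOp d f z = d i * z i * pd i f z :=
  Finset.sum_eq_single i (fun α _ hα => by rw [h α hα, mul_zero]) (by simp)

def IsWeightedHomogeneousOn (d : Fin n → ℝ) (k : ℂ) (f : (Fin n → ℂ) → ℂ)
    (U : Set (Fin n → ℂ)) : Prop :=
  ∀ z ∈ U, eulerOp d f z = k * f z

theorem IsWeightedHomogeneousOn.pd {d : Fin n → ℝ} {k : ℂ}
    (h : IsWeightedHomogeneousOn d k f U) (hU : IsOpen U) (hf : DifferentiableOn ℂ f U)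
    (ε : Fin n) : IsWeightedHomogeneousOn d (k - d ε) (pd ε f) U := fun z hz => by
  have h' := Set.EqOn.pd_eq (g := fun w => k * f w) h hU hz ε
  rw [pd_eulerOp hU hf d hz, pd_const_mul (hf.differentiableAt (hU.mem_nhds hz))] at h'
  linear_combination h'

end PartialDerivatives

section QuadraticPotential

variable {n : ℕ} {d : Fin n → ℝ} {U : Set (Fin n → ℂ)} {F : (Fin n → ℂ) → ℂ} {i : Fin n}

theorem pd_pd_eqOn_zero_of_ne (hU : IsOpen U) (hF : DifferentiableOn ℂ F U) (hdi : d i = 1)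
    (hd : ∀ j ≠ i, d j < 1) (hEF : IsWeightedHomogeneousOn d 2 F U)
    (hE2 : ∀ ε μ, ∀ z ∈ U, eulerOp d (pd ε (pd μ F)) z = 0) {ε μ : Fin n} (hεμ : ε ≠ i ∨ μ ≠ i) :
    EqOn (pd ε (pd μ F)) 0 U := fun z hz => by
  have h := (hEF.pd hU hF μ).pd hU (hF.pd hU μ) ε z hz
  rw [hE2 ε μ z hz] at h
  have hd_le : ∀ j, d j ≤ 1 := fun j => by
    rcases eq_or_ne j i with rfl | hj
    exacts [hdi.le, (hd j hj).le]
  have hsum : d μ + d ε < 2 := by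
    rcases hεμ with h' | h' <;> linarith [hd _ h', hd_le ε, hd_le μ]
  have hk : (2 - d μ - d ε : ℂ) ≠ 0 := by
    exact_mod_cast (by linarith : (0 : ℝ) < 2 - d μ - d ε).ne'
  exact (mul_eq_zero.1 h.symm).resolve_left hk

theorem exists_pd_pd_eq_const (hU : IsOpen U) (hU' : IsPreconnected U)
    (hF : DifferentiableOn ℂ F U) (hdi : d i = 1) (hd : ∀ j ≠ i, d j < 1)
    (hEF : IsWeightedHomogeneousOn d 2 F U)
    (hE2 : ∀ ε μ, ∀ z ∈ U, eulerOp d (pd ε (pd μ F)) z = 0) :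
    ∃ c, ∀ z ∈ U, pd i (pd i F) z = c := by
  have hF₁ := hF.pd hU i
  have hF₂ := hF₁.pd hU i
  have hF₃_ne : ∀ α ≠ i, ∀ z ∈ U, pd α (pd i (pd i F)) z = 0 := fun α hα z hz => by
    rw [pd_pd_comm hU hF₁ hz α i]
    exact pd_eq_zero_of_eqOn_zero (pd_pd_eqOn_zero_of_ne hU hF hdi hd hEF hE2 (.inl hα)) hU hz i
  have hF₃_i : EqOn (pd i (pd i (pd i F))) 0 U :=
    eqOn_zero_of_coord_mul_eq_zero hU (hF₂.pd hU i).continuousOn i fun z hz => by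
      have h := hE2 i i z hz
      rwa [eulerOp_eq_of_pd_eq_zero (hF₃_ne · · z hz), hdi, ofReal_one, one_mul] at h
  refine exists_eq_const_of_pd_eq_zero hU hU' hF₂ fun α z hz => ?_
  rcases eq_or_ne α i with rfl | hα
  exacts [hF₃_i hz, hF₃_ne α hα z hz]

theorem exists_eq_mul_coord_sq (hU : IsOpen U) (hU' : IsPreconnected U)
    (hF : DifferentiableOn ℂ F U) (hdi : d i = 1) (hd : ∀ j ≠ i, d j < 1)
    (hEF : IsWeightedHomogeneousOn d 2 F U)
    (hE2 : ∀ ε μ, ∀ z ∈ U, eulerOp d (pd ε (pd μ F)) z = 0) :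
    ∃ c, ∀ z ∈ U, F z = c * z i ^ 2 := by
  obtain ⟨c, hc⟩ := exists_pd_pd_eq_const hU hU' hF hdi hd hEF hE2
  have hpd_pd : ∀ μ, ∀ z ∈ U, ∀ α ≠ i, pd α (pd μ F) z = 0 := fun μ z hz α hα =>
    pd_pd_eqOn_zero_of_ne hU hF hdi hd hEF hE2 (.inl hα) hz
  have hpd_ne : ∀ μ ≠ i, ∀ z ∈ U, pd μ F z = 0 := fun μ hμ z hz => by
    have h := hEF.pd hU hF μ z hz
    rw [eulerOp_eq_of_pd_eq_zero (hpd_pd μ z hz),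
      pd_pd_eqOn_zero_of_ne hU hF hdi hd hEF hE2 (.inr hμ) hz] at h
    have hk : (2 - d μ : ℂ) ≠ 0 := by
      exact_mod_cast (by linarith [hd μ hμ] : (0 : ℝ) < 2 - d μ).ne'
    exact (mul_eq_zero.1 (by simpa using h.symm)).resolve_left hk
  have hpd_i : ∀ z ∈ U, pd i F z = c * z i := fun z hz => by
    have h := hEF.pd hU hF i z hz
    rw [eulerOp_eq_of_pd_eq_zero (hpd_pd i z hz), hc z hz, hdi, ofReal_one] at h
    linear_combination -h
  refine ⟨c / 2, fun z hz => ?_⟩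
  have h := hEF z hz
  rw [eulerOp_eq_of_pd_eq_zero (hpd_ne · · z hz), hpd_i z hz, hdi, ofReal_one] at h
  linear_combination -h / 2

end QuadraticPotential

/-- Let `d(1) = 1` and `0 ≤ d(i) < 1` for `i ≠ 1`, and let `F` be holomorphic on
`Ω = {z ∈ ℂⁿ | Im z_n > 0}`.  If `E F = 2F` on `Ω` and `E(∂_ε ∂_μ F) = 0` on `Ω`
for all `ε, μ`, where `E` is the weighted Euler operator, then `F = c·z₁²` for
some constant `c ∈ ℂ`. -/
theorem potential_unique_of_euler_conditions
    (n : ℕ) (hn : 2 ≤ n) (d : Fin n → ℝ)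
    (hd1 : d ⟨0, by omega⟩ = 1)
    (hd : ∀ i : Fin n, i ≠ ⟨0, by omega⟩ → 0 ≤ d i ∧ d i < 1)
    (F : (Fin n → ℂ) → ℂ)
    (hF : DifferentiableOn ℂ F {z : Fin n → ℂ | 0 < (z ⟨n - 1, by omega⟩).im})
    (hEF : ∀ z ∈ {z : Fin n → ℂ | 0 < (z ⟨n - 1, by omega⟩).im},
      eulerOp d F z = 2 * F z)
    (hE2 : ∀ ε μ : Fin n, ∀ z ∈ {z : Fin n → ℂ | 0 < (z ⟨n - 1, by omega⟩).im},
      eulerOp d (pd ε (pd μ F)) z = 0) :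
    ∃ c : ℂ, ∀ z ∈ {z : Fin n → ℂ | 0 < (z ⟨n - 1, by omega⟩).im},
      F z = c * (z ⟨0, by omega⟩) ^ 2 := by
  have hΩ : IsOpen {z : Fin n → ℂ | 0 < (z ⟨n - 1, by omega⟩).im} :=
    isOpen_lt continuous_const (continuous_im.comp (continuous_apply _))
  have hΩ' : IsPreconnected {z : Fin n → ℂ | 0 < (z ⟨n - 1, by omega⟩).im} :=
    (convex_halfSpace_gt ⟨fun _ _ => rfl, fun _ _ => by simp⟩ 0).isPreconnected
  exact exists_eq_mul_coord_sq hΩ hΩ' hF hd1 (fun j hj => (hd j hj).2) hEF hE2
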